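/- arXiv:2505.11902 — 2 statements merged into one kernel-verified Lean document; each statement's English description precedes it below -/
import Mathlib

section
/- Let F : ℝ^d → ℝ be differentiable with L-Lipschitz gradient (L > 0), attaining its infimum F* := inf F, and satisfying the Polyak–Łojasiewicz inequality with constant μ > 0: (1/2)‖∇F(x)‖² ≥ μ (F(x) − F*) for all x. Let x ∈ ℝ^d with ‖∇F(x)‖ ≤ G, let g ∈ ℝ^d satisfy ‖g − ∇F(x)‖ ≤ δ for some δ ≥ 0, let 0 < α ≤ 1/L, and set x' := x − α g. Then F(x') − F* ≤ (1 − μ α)(F(x) − F*) + 2 α δ G + (L/2) α² δ². -/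
/-!
By the descent lemma `F (x + v) ≤ F x + ⟪∇F x, v⟫ + L/2 ‖v‖²` (integrate the Lipschitz bound on
the derivative of `t ↦ F (x + t v)`), the step `v = -α g` with `g = ∇F x + e` gives
`F x' ≤ F x - α(1 - Lα/2)‖∇F x‖² - α(1 - Lα)⟪∇F x, e⟫ + L/2 α²‖e‖²`.
As `0 ≤ Lα ≤ 1`, the first term is at most `-α/2 ‖∇F x‖² ≤ -μα (F x - F*)` by PL, and
Cauchy–Schwarz bounds the cross term by `α G δ`.
-/

open scoped RealInnerProductSpace

variable {E : Type*} [NormedAddCommGroup E] [InnerProductSpace ℝ E] [CompleteSpace E]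

theorem HasGradientAt.hasDerivAt_comp_add_smul {F : E → ℝ} {F' x v : E} {t : ℝ}
    (hF : HasGradientAt F F' (x + t • v)) :
    HasDerivAt (fun s : ℝ => F (x + s • v)) ⟪F', v⟫ t := by
  have hline : HasDerivAt (fun s : ℝ => x + s • v) v t := by
    simpa using ((hasDerivAt_id t).smul_const v).const_add x
  have h := hF.hasFDerivAt.comp_hasDerivAt t hline
  rw [InnerProductSpace.toDual_apply_apply] at h
  exact h

theorem apply_add_le_of_lipschitz_gradient {F : E → ℝ} {L : ℝ} (hF : Differentiable ℝ F)
    (hlip : ∀ x y, ‖gradient F x - gradient F y‖ ≤ L * ‖x - y‖) (x v : E) :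
    F (x + v) ≤ F x + ⟪gradient F x, v⟫ + L / 2 * ‖v‖ ^ 2 := by
  have hderiv (t : ℝ) : HasDerivAt (fun s : ℝ => F (x + s • v) - F x - s * ⟪gradient F x, v⟫)
      (⟪gradient F (x + t • v), v⟫ - ⟪gradient F x, v⟫) t :=
    (((hF _).hasGradientAt.hasDerivAt_comp_add_smul.sub_const (F x)).sub
      ((hasDerivAt_id t).mul_const ⟪gradient F x, v⟫)).congr_deriv (by ring)
  have hbound (t : ℝ) (ht : 0 ≤ t) :
      ⟪gradient F (x + t • v), v⟫ - ⟪gradient F x, v⟫ ≤ L * t * ‖v‖ ^ 2 :=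
    calc ⟪gradient F (x + t • v), v⟫ - ⟪gradient F x, v⟫
        = ⟪gradient F (x + t • v) - gradient F x, v⟫ := (inner_sub_left ..).symm
      _ ≤ ‖gradient F (x + t • v) - gradient F x‖ * ‖v‖ := real_inner_le_norm _ _
      _ ≤ L * (t * ‖v‖) * ‖v‖ := by
          gcongr
          simpa [norm_smul, abs_of_nonneg ht] using hlip (x + t • v) x
      _ = L * t * ‖v‖ ^ 2 := by ring
  have hB (t : ℝ) : HasDerivAt (fun s : ℝ => L / 2 * s ^ 2 * ‖v‖ ^ 2) (L * t * ‖v‖ ^ 2) t :=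
    (((hasDerivAt_pow 2 t).const_mul (L / 2)).mul_const (‖v‖ ^ 2)).congr_deriv (by ring)
  have key := image_le_of_deriv_right_le_deriv_boundary
    (fun t _ => (hderiv t).continuousAt.continuousWithinAt)
    (fun t _ => (hderiv t).hasDerivWithinAt) (by simp)
    (fun t _ => (hB t).continuousAt.continuousWithinAt)
    (fun t _ => (hB t).hasDerivWithinAt) (fun t ht => hbound t ht.1)
    (Set.right_mem_Icc.2 zero_le_one)
  simp only [one_smul, one_mul, one_pow, mul_one] at key
  linarith

theorem apply_sub_smul_le_of_lipschitz_gradient {F : E → ℝ} {L α : ℝ} (hF : Differentiable ℝ F)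
    (hlip : ∀ x y, ‖gradient F x - gradient F y‖ ≤ L * ‖x - y‖)
    (hL : 0 ≤ L) (hα : 0 ≤ α) (hLα : L * α ≤ 1) (x g : E) :
    F (x - α • g) ≤ F x - α / 2 * ‖gradient F x‖ ^ 2
      + α * (‖gradient F x‖ * ‖g - gradient F x‖) + L / 2 * α ^ 2 * ‖g - gradient F x‖ ^ 2 := by
  obtain ⟨e, rfl⟩ : ∃ e, g = gradient F x + e := ⟨g - gradient F x, by abel⟩
  set p := gradient F x
  have hexpand : ⟪p, -(α • (p + e))⟫ + L / 2 * ‖-(α • (p + e))‖ ^ 2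
      = -(α * (1 - L * α / 2)) * ‖p‖ ^ 2 - α * (1 - L * α) * ⟪p, e⟫ + L / 2 * α ^ 2 * ‖e‖ ^ 2 := by
    simp only [inner_neg_right, inner_smul_right, inner_add_right, real_inner_self_eq_norm_sq,
      norm_neg, norm_smul, mul_pow, norm_add_sq_real, Real.norm_eq_abs, sq_abs]
    ring
  have hquad : α / 2 * ‖p‖ ^ 2 ≤ α * (1 - L * α / 2) * ‖p‖ ^ 2 :=
    mul_le_mul_of_nonneg_right (by nlinarith) (sq_nonneg _)
  have hcross : -(α * (1 - L * α) * ⟪p, e⟫) ≤ α * (‖p‖ * ‖e‖) :=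
    calc -(α * (1 - L * α) * ⟪p, e⟫) = α * (1 - L * α) * -⟪p, e⟫ := by ring
      _ ≤ α * (1 - L * α) * (‖p‖ * ‖e‖) :=
          mul_le_mul_of_nonneg_left (neg_le.mp (neg_le_of_abs_le (abs_real_inner_le_norm p e)))
            (mul_nonneg hα (by linarith))
      _ ≤ α * (‖p‖ * ‖e‖) :=
          mul_le_mul_of_nonneg_right (by nlinarith [mul_nonneg hL hα]) (by positivity)
  have hdescent := apply_add_le_of_lipschitz_gradient hF hlip x (-(α • (p + e)))
  rw [← sub_eq_add_neg, add_assoc, hexpand] at hdescent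
  rw [add_sub_cancel_left]
  linarith

theorem pl_step_inexact_gradient_general {d : ℕ}
    (F : EuclideanSpace ℝ (Fin d) → ℝ) (L μ : ℝ) (hL : 0 < L)
    (hdiff : Differentiable ℝ F)
    (hlip : ∀ x y, ‖gradient F x - gradient F y‖ ≤ L * ‖x - y‖)
    (Fstar : ℝ)
    (hPL : ∀ z, μ * (F z - Fstar) ≤ (1 / 2) * ‖gradient F z‖ ^ 2)
    (x g : EuclideanSpace ℝ (Fin d)) (G : ℝ) (hGx : ‖gradient F x‖ ≤ G)
    (δ : ℝ) (hg : ‖g - gradient F x‖ ≤ δ)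
    (α : ℝ) (hα : 0 < α) (hαL : α ≤ 1 / L) :
    F (x - α • g) - Fstar ≤ (1 - μ * α) * (F x - Fstar)
      + 2 * α * δ * G + (L / 2) * α ^ 2 * δ ^ 2 := by
  have hLα : L * α ≤ 1 := by rwa [le_div_iff₀ hL, mul_comm] at hαL
  have hstep := apply_sub_smul_le_of_lipschitz_gradient hdiff hlip hL.le hα.le hLα x g
  have hPLx : μ * α * (F x - Fstar) ≤ α / 2 * ‖gradient F x‖ ^ 2 := by
    have := mul_le_mul_of_nonneg_left (hPL x) hα.le
    linarith
  have hG : 0 ≤ G := (norm_nonneg _).trans hGx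
  have hδ : 0 ≤ δ := (norm_nonneg _).trans hg
  have hcross : α * (‖gradient F x‖ * ‖g - gradient F x‖) ≤ 2 * α * δ * G :=
    calc α * (‖gradient F x‖ * ‖g - gradient F x‖) ≤ α * (G * δ) := by gcongr
      _ ≤ 2 * α * δ * G := by linarith [mul_nonneg (mul_nonneg hα.le hδ) hG]
  have herror : L / 2 * α ^ 2 * ‖g - gradient F x‖ ^ 2 ≤ L / 2 * α ^ 2 * δ ^ 2 := by
    gcongr
  linarith

/-- One inexact gradient step under the Polyak–Łojasiewicz condition: if
`F : ℝ^d → ℝ` is differentiable with `L`-Lipschitz gradient, attains its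
infimum `F*`, and satisfies the PL inequality `(1/2)‖∇F(x)‖² ≥ μ(F(x) - F*)`,
if `‖∇F(x)‖ ≤ G`, `g` approximates `∇F(x)` up to drift `δ`, and `0 < α ≤ 1/L`,
then the step `x' = x - α g` satisfies
`F(x') - F* ≤ (1 - μα)(F(x) - F*) + 2αδG + (L/2)α²δ²`. -/
theorem pl_step_inexact_gradient {d : ℕ}
    (F : EuclideanSpace ℝ (Fin d) → ℝ) (L μ : ℝ) (hL : 0 < L) (hμ : 0 < μ)
    (hdiff : Differentiable ℝ F)
    (hlip : ∀ x y, ‖gradient F x - gradient F y‖ ≤ L * ‖x - y‖)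
    (Fstar : ℝ) (hglb : IsGLB (Set.range F) Fstar) (hatt : ∃ z, F z = Fstar)
    (hPL : ∀ z, μ * (F z - Fstar) ≤ (1 / 2) * ‖gradient F z‖ ^ 2)
    (x g : EuclideanSpace ℝ (Fin d)) (G : ℝ) (hGx : ‖gradient F x‖ ≤ G)
    (δ : ℝ) (hδ : 0 ≤ δ) (hg : ‖g - gradient F x‖ ≤ δ)
    (α : ℝ) (hα : 0 < α) (hαL : α ≤ 1 / L) :
    F (x - α • g) - Fstar ≤ (1 - μ * α) * (F x - Fstar)
      + 2 * α * δ * G + (L / 2) * α ^ 2 * δ ^ 2 :=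
  pl_step_inexact_gradient_general F L μ hL hdiff hlip Fstar hPL x g G hGx δ hg α hα hαL
end

section
/- Under the hypotheses of the dynamic regret bound — convex differentiable per-round losses ℓ_t with ‖∇ℓ_t‖ ≤ G, minimizers u_t, iterates x_{t+1} = x_t − α∇ℓ_t(x_t), and uniform distance bound ‖x_t − u_t‖ ≤ D, ‖x_t − u_{t−1}‖ ≤ D — if the constant step size is chosen as α = c/√T for some c > 0 and T ≥ 1, then R_T := Σ_{t=0}^{T−1}(ℓ_t(x_t) − ℓ_t(u_t)) ≤ (D²/(2c)) √T + (c G²/2) √T + (D/c) √T · CV_T. In particular, R_T/T → 0 as T → ∞ whenever CV_T = o(√T). -/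
/-!
Convexity gives `ℓ t (x t) - ℓ t (u t) ≤ ⟪∇ℓ_t(x t), x t - u t⟫`, and expanding
`‖x (t+1) - u t‖²` for the gradient step turns this inner product into
`(‖x t - u t‖² - ‖x (t+1) - u t‖²) / (2α) + (α/2) ‖∇ℓ_t(x t)‖²`. Summed over the rounds, the
squared distances telescope except for the drift terms
`‖x t - u t‖² - ‖x t - u (t-1)‖² ≤ 2D ‖u t - u (t-1)‖`, so
`R_T ≤ (D² + 2D · CV_T) / (2α) + T α G² / 2`, and `α = c / √T` turns both terms into `O(√T)`.
-/

open Finset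

section FirstOrderCondition

variable {E : Type*} [NormedAddCommGroup E]

theorem ConvexOn.add_fderiv_sub_le [NormedSpace ℝ E] {s : Set E} {f : E → ℝ} {f' : E →L[ℝ] ℝ}
    {x y : E} (hf : ConvexOn ℝ s f) (hx : x ∈ s) (hy : y ∈ s) (hf' : HasFDerivAt f f' x) :
    f x + f' (y - x) ≤ f y := by
  set φ : ℝ →ᵃ[ℝ] E := AffineMap.lineMap x y
  have hderiv : HasDerivAt (f ∘ φ) (f' (y - x)) 0 :=
    (by simpa [φ] using hf' : HasFDerivAt f f' (φ 0)).comp_hasDerivAt _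
      AffineMap.hasDerivAt_lineMap
  have hslope := (hf.comp_affineMap φ).le_slope_of_hasDerivAt (by simpa [φ]) (by simpa [φ])
    zero_lt_one hderiv
  simp only [slope_def_field, Function.comp_apply, AffineMap.lineMap_apply_one,
    AffineMap.lineMap_apply_zero, sub_zero, div_one, φ] at hslope
  linarith

theorem ConvexOn.add_inner_sub_le_of_hasGradientAt [InnerProductSpace ℝ E] [CompleteSpace E]
    {s : Set E} {f : E → ℝ} {g x y : E} (hf : ConvexOn ℝ s f) (hx : x ∈ s) (hy : y ∈ s)
    (hg : HasGradientAt f g x) : f x + inner ℝ g (y - x) ≤ f y := by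
  simpa using hf.add_fderiv_sub_le hx hy hg.hasFDerivAt

end FirstOrderCondition

theorem sq_norm_sub_sq_norm_le {F : Type*} [SeminormedAddCommGroup F] {a b : F} {D : ℝ}
    (ha : ‖a‖ ≤ D) (hb : ‖b‖ ≤ D) : ‖a‖ ^ 2 - ‖b‖ ^ 2 ≤ 2 * D * ‖a - b‖ := by
  nlinarith [mul_nonneg (sub_nonneg.2 (norm_sub_norm_le a b))
      (add_nonneg (norm_nonneg a) (norm_nonneg b)),
    mul_le_mul_of_nonneg_left (add_le_add ha hb) (norm_nonneg (a - b))]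

theorem Finset.sum_range_sub_eq_sub_add_sum_Ico {M : Type*} [AddCommGroup M] (A B : ℕ → M)
    {n : ℕ} (hn : 1 ≤ n) :
    ∑ t ∈ range n, (A t - B t) = A 0 - B (n - 1) + ∑ t ∈ Ico 1 n, (A t - B (t - 1)) := by
  obtain ⟨m, rfl⟩ := Nat.exists_eq_add_of_le' hn
  rw [sum_Ico_eq_sum_range]
  simp only [sum_sub_distrib, sum_range_succ', sum_range_succ B, add_tsub_cancel_right, add_comm 1]
  abel

section OnlineGradientDescent

variable {E : Type*} [NormedAddCommGroup E] [InnerProductSpace ℝ E] [CompleteSpace E]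

theorem ConvexOn.sub_le_of_gradient_step {s : Set E} {f : E → ℝ} {g x u : E} {α : ℝ}
    (hf : ConvexOn ℝ s f) (hx : x ∈ s) (hu : u ∈ s) (hg : HasGradientAt f g x) (hα : 0 < α) :
    f x - f u ≤ (‖x - u‖ ^ 2 - ‖x - α • g - u‖ ^ 2) / (2 * α) + α / 2 * ‖g‖ ^ 2 := by
  have hfirst := hf.add_inner_sub_le_of_hasGradientAt hx hu hg
  have hexpand : ‖x - α • g - u‖ ^ 2
      = ‖x - u‖ ^ 2 - 2 * α * inner ℝ g (x - u) + α ^ 2 * ‖g‖ ^ 2 := by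
    rw [sub_right_comm, norm_sub_sq_real, real_inner_smul_right, real_inner_comm, norm_smul,
      Real.norm_of_nonneg hα.le]
    ring
  rw [← neg_sub, inner_neg_right] at hfirst
  have hrhs : (‖x - u‖ ^ 2 - ‖x - α • g - u‖ ^ 2) / (2 * α) + α / 2 * ‖g‖ ^ 2
      = inner ℝ g (x - u) := by
    rw [hexpand]
    field_simp
    ring
  linarith

theorem ogd_dynamic_regret_le {T : ℕ} (hT : 1 ≤ T) {ℓ : ℕ → E → ℝ} {G D α : ℝ} (hα : 0 < α)
    {u x : ℕ → E} (hconv : ∀ t < T, ConvexOn ℝ Set.univ (ℓ t))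
    (hdiff : ∀ t < T, DifferentiableAt ℝ (ℓ t) (x t))
    (hG : ∀ t < T, ‖gradient (ℓ t) (x t)‖ ≤ G)
    (hiter : ∀ t < T, x (t + 1) = x t - α • gradient (ℓ t) (x t))
    (hD1 : ∀ t < T, ‖x t - u t‖ ≤ D)
    (hD2 : ∀ t, 1 ≤ t → t < T → ‖x t - u (t - 1)‖ ≤ D) :
    ∑ t ∈ range T, (ℓ t (x t) - ℓ t (u t))
      ≤ (D ^ 2 + 2 * D * ∑ t ∈ Ico 1 T, ‖u t - u (t - 1)‖) / (2 * α) + T * (α / 2 * G ^ 2) := by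
  set A : ℕ → ℝ := fun t => ‖x t - u t‖ ^ 2
  set B : ℕ → ℝ := fun t => ‖x (t + 1) - u t‖ ^ 2
  have hround : ∀ t ∈ range T,
      ℓ t (x t) - ℓ t (u t) ≤ (A t - B t) / (2 * α) + α / 2 * G ^ 2 := by
    intro t ht
    have ht := mem_range.1 ht
    have hstep := (hconv t ht).sub_le_of_gradient_step (Set.mem_univ (x t)) (Set.mem_univ (u t))
      (hdiff t ht).hasGradientAt hα
    rw [← hiter t ht] at hstep
    have hGsq := pow_le_pow_left₀ (norm_nonneg _) (hG t ht) 2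
    have hsq_term : α / 2 * ‖gradient (ℓ t) (x t)‖ ^ 2 ≤ α / 2 * G ^ 2 := by gcongr
    linarith
  have hdrift : ∀ t ∈ Ico 1 T, A t - B (t - 1) ≤ 2 * D * ‖u t - u (t - 1)‖ := by
    intro t ht
    obtain ⟨h1t, htT⟩ := mem_Ico.1 ht
    have h := sq_norm_sub_sq_norm_le (hD1 t htT) (hD2 t h1t htT)
    rw [sub_sub_sub_cancel_left, norm_sub_rev (u (t - 1))] at h
    simpa [A, B, Nat.sub_add_cancel h1t] using h
  have htelescope :
      ∑ t ∈ range T, (A t - B t) ≤ D ^ 2 + 2 * D * ∑ t ∈ Ico 1 T, ‖u t - u (t - 1)‖ := by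
    rw [sum_range_sub_eq_sub_add_sum_Ico A B hT, mul_sum]
    have hdrift_sum := sum_le_sum hdrift
    have hA₀ : A 0 ≤ D ^ 2 := pow_le_pow_left₀ (norm_nonneg _) (hD1 0 hT) 2
    have hB_nonneg : 0 ≤ B (T - 1) := sq_nonneg _
    linarith
  calc ∑ t ∈ range T, (ℓ t (x t) - ℓ t (u t))
      ≤ ∑ t ∈ range T, ((A t - B t) / (2 * α) + α / 2 * G ^ 2) := sum_le_sum hround
    _ = (∑ t ∈ range T, (A t - B t)) / (2 * α) + T * (α / 2 * G ^ 2) := by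
      rw [sum_add_distrib, ← sum_div, sum_const, card_range, nsmul_eq_mul]
    _ ≤ _ := by gcongr

end OnlineGradientDescent

theorem ogd_dynamic_regret_sqrt_step_general {d : ℕ} (T : ℕ)
    (ℓ : ℕ → EuclideanSpace ℝ (Fin d) → ℝ) (G D c α : ℝ) (hc : 0 < c)
    (hαdef : α = c / Real.sqrt T)
    (hconv : ∀ t < T, ConvexOn ℝ Set.univ (ℓ t))
    (hdiff : ∀ t < T, Differentiable ℝ (ℓ t))
    (hG : ∀ t < T, ∀ y, ‖gradient (ℓ t) y‖ ≤ G)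
    (u : ℕ → EuclideanSpace ℝ (Fin d))
    (x : ℕ → EuclideanSpace ℝ (Fin d))
    (hiter : ∀ t < T, x (t + 1) = x t - α • gradient (ℓ t) (x t))
    (hD1 : ∀ t < T, ‖x t - u t‖ ≤ D)
    (hD2 : ∀ t, 1 ≤ t → t < T → ‖x t - u (t - 1)‖ ≤ D) :
    ∑ t ∈ Finset.range T, (ℓ t (x t) - ℓ t (u t))
      ≤ (D ^ 2 / (2 * c)) * Real.sqrt T + (c * G ^ 2 / 2) * Real.sqrt T
        + (D / c) * Real.sqrt T * ∑ t ∈ Finset.Ico 1 T, ‖u t - u (t - 1)‖ := by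
  rcases Nat.eq_zero_or_pos T with rfl | hT
  · simp
  have hsqrt : 0 < Real.sqrt T := Real.sqrt_pos.2 (by exact_mod_cast hT)
  have hα : 0 < α := hαdef ▸ div_pos hc hsqrt
  refine (ogd_dynamic_regret_le hT hα hconv (fun t ht => hdiff t ht (x t))
    (fun t ht => hG t ht (x t)) hiter hD1 hD2).trans_eq ?_
  set s := Real.sqrt T
  have hT_eq : (T : ℝ) = s ^ 2 := (Real.sq_sqrt T.cast_nonneg).symm
  rw [hαdef, hT_eq]
  field_simp
  ring

/-- Sublinear dynamic regret with step size `α = c/√T`: under the hypotheses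
of the dynamic regret bound (convex differentiable per-round losses `ℓ t` with
`‖∇ℓ_t‖ ≤ G`, per-round minimizers `u t`, iterates
`x (t+1) = x t - α ∇ℓ_t(x t)`, and uniform distance bounds
`‖x t - u t‖ ≤ D`, `‖x t - u (t-1)‖ ≤ D`), if `T ≥ 1` and `α = c / √T` for
some `c > 0`, then the dynamic regret satisfies
`R_T ≤ (D²/(2c))√T + (cG²/2)√T + (D/c)√T · CV_T`, where
`CV_T = ∑_{t=1}^{T-1} ‖u t - u (t-1)‖`. -/
theorem ogd_dynamic_regret_sqrt_step {d : ℕ} (T : ℕ) (hT : 1 ≤ T)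
    (ℓ : ℕ → EuclideanSpace ℝ (Fin d) → ℝ) (G D c α : ℝ) (hc : 0 < c)
    (hαdef : α = c / Real.sqrt T)
    (hconv : ∀ t < T, ConvexOn ℝ Set.univ (ℓ t))
    (hdiff : ∀ t < T, Differentiable ℝ (ℓ t))
    (hG : ∀ t < T, ∀ y, ‖gradient (ℓ t) y‖ ≤ G)
    (u : ℕ → EuclideanSpace ℝ (Fin d))
    (hu : ∀ t < T, ∀ y, ℓ t (u t) ≤ ℓ t y)
    (x : ℕ → EuclideanSpace ℝ (Fin d))
    (hiter : ∀ t < T, x (t + 1) = x t - α • gradient (ℓ t) (x t))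
    (hD1 : ∀ t < T, ‖x t - u t‖ ≤ D)
    (hD2 : ∀ t, 1 ≤ t → t < T → ‖x t - u (t - 1)‖ ≤ D) :
    ∑ t ∈ Finset.range T, (ℓ t (x t) - ℓ t (u t))
      ≤ (D ^ 2 / (2 * c)) * Real.sqrt T + (c * G ^ 2 / 2) * Real.sqrt T
        + (D / c) * Real.sqrt T * ∑ t ∈ Finset.Ico 1 T, ‖u t - u (t - 1)‖ :=
  ogd_dynamic_regret_sqrt_step_general T ℓ G D c α hc hαdef hconv hdiff hG u x hiter hD1 hD2
end
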